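/- Algorithm 1 (recursive DT construction by abstraction refinement) is sound and complete: upon termination it returns a decision tree 𝒫(f) with f ∈ argmax_{f ∈ F^𝒫} V(𝒫(f)), i.e., a decision tree of maximal value among all instantiations of the given tree template 𝒫. Moreover, no parameterization of maximal value is ever discarded by the pruning steps unless a parameterization of maximal value has already been recorded as the running optimum. -/

import Mathlib

/-!
Invariant: either the recorded optimum is maximal, or some subset on the stack contains a
maximal parameterization. Splitting preserves it since `F₁ ∪ F₂ = F`. Pruning and accepting
preserve it since every `f ∈ F` induces a policy of the family-MDP `M(F)`, so the optimal value
`V(σ)` of `M(F)` bounds `V(𝒫(f))`; a pruned maximal `f` is thus dominated by the recorded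
optimum, an accepted one by the newly recorded `f` inducing `σ`, and recorded values only
increase. At termination the stack is empty, so the recorded optimum is maximal.
-/

namespace Paper15

open scoped NNReal

/-- A Markov decision process with finite state space `S`, action set `A`,
an initial state, and a partial transition function assigning to (some) state-action
pairs a probability distribution over states. -/
structure MDP (S A : Type) [Fintype S] where
  init : S
  P : S → A → Option (S → ℝ≥0)
  sum_one : ∀ s a d, P s a = some d → ∑ s', d s' = 1
  avail_nonempty : ∀ s, ∃ a, (P s a).isSome

variable {S A : Type} [Fintype S] [DecidableEq S]

/-- Action `a` is available in state `s`. -/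
def MDP.Avail (M : MDP S A) (s : S) (a : A) : Prop := (M.P s a).isSome

/-- A (memoryless deterministic) policy: selects an available action in every state. -/
def MDP.IsPolicy (M : MDP S A) (σ : S → A) : Prop := ∀ s, M.Avail s (σ s)

/-- Transition matrix of the Markov chain induced by policy `σ`. -/
def MDP.trans (M : MDP S A) (σ : S → A) (s s' : S) : ℝ≥0 :=
  ((M.P s (σ s)).getD fun _ => 0) s'

/-- Probability of reaching the goal set `G` within `n` steps. -/
def reachAux (T : S → S → ℝ≥0) (G : Finset S) : ℕ → S → ℝ≥0
  | 0, s => if s ∈ G then 1 else 0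
  | n + 1, s => if s ∈ G then 1 else ∑ s', T s s' * reachAux T G n s'

/-- Probability of reaching the goal set `G` from state `s` in the Markov chain
with transition matrix `T`. -/
noncomputable def reachProb (T : S → S → ℝ≥0) (G : Finset S) (s : S) : ℝ≥0 :=
  ⨆ n, reachAux T G n s

/-- Value of policy `σ`: probability of reaching `G` from the initial state in the
induced Markov chain. -/
noncomputable def MDP.polValue (M : MDP S A) (G : Finset S) (σ : S → A) : ℝ≥0 :=
  reachProb (M.trans σ) G M.init

/-- Value of the MDP: supremum of policy values. -/
noncomputable def MDP.value (M : MDP S A) (G : Finset S) : ℝ≥0 :=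
  ⨆ σ : { σ : S → A // M.IsPolicy σ }, M.polValue G σ.1

/-- A decision tree for an MDP whose states are valuations of the variables in `Var`:
leaves carry actions from `A`, inner nodes carry a state predicate `v ≤ b`
(a variable `v : Var` together with an integer bound `b`); the left subtree
corresponds to states satisfying the predicate, the right subtree to the others. -/
inductive DT (Var A : Type) : Type
  | leaf (a : A)
  | node (v : Var) (b : ℤ) (l r : DT Var A)

variable {Var A : Type}

/-- Evaluation of a decision tree on a state (valuation): follow the predicates
from the root to a leaf and return the leaf's action. -/
def DT.eval : DT Var A → (Var → ℤ) → A
  | .leaf a, _ => a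
  | .node v b l r, s => if s v ≤ b then l.eval s else r.eval s

/-- Depth of a decision tree. -/
def DT.depth : DT Var A → ℕ
  | .leaf _ => 0
  | .node _ _ l r => max l.depth r.depth + 1

/-- `t.IsLeafAt π` holds iff the path `π` (list of booleans; `true` = go left)
leads from the root of `t` to a leaf. -/
def DT.IsLeafAt : DT Var A → List Bool → Prop
  | .leaf _, [] => True
  | .node _ _ l _, true :: p => l.IsLeafAt p
  | .node _ _ _ r, false :: p => r.IsLeafAt p
  | _, _ => False

/-- The set of states (within the state space `X`) corresponding to the node of the
tree reached by path `π`: the root corresponds to all of `X`, the left child of a node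
to the states of the node satisfying its predicate, and the right child to those
not satisfying it.  Invalid paths correspond to `∅`. -/
def DT.statesAt : DT Var A → Set (Var → ℤ) → List Bool → Set (Var → ℤ)
  | _, X, [] => X
  | .node v b l _, X, true :: p => l.statesAt {s ∈ X | s v ≤ b} p
  | .node v b _ r, X, false :: p => r.statesAt {s ∈ X | ¬ s v ≤ b} p
  | .leaf _, _, _ :: _ => ∅

/-- The skeleton (topology) of a binary tree: the underlying tree `T` of a tree
template, forgetting all labels. -/
inductive Skel : Type
  | leaf
  | node (l r : Skel)

/-- `sk.IsInnerAt π` holds iff the path `π` (`true` = left) leads from the root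
to an inner node of the skeleton. -/
def Skel.IsInnerAt : Skel → List Bool → Prop
  | .node _ _, [] => True
  | .node l _, true :: p => l.IsInnerAt p
  | .node _ r, false :: p => r.IsInnerAt p
  | _, _ => False

/-- `sk.IsLeafAt π` holds iff the path `π` leads from the root to a leaf
of the skeleton. -/
def Skel.IsLeafAt : Skel → List Bool → Prop
  | .leaf, [] => True
  | .node l _, true :: p => l.IsLeafAt p
  | .node _ r, false :: p => r.IsLeafAt p
  | _, _ => False

/-- A parameterization `f = (δ̂, β, α̂)` of a tree template: a variable-selection
function, a bound-selection function (on inner nodes, addressed by root-to-node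
paths) and an action-selection function (on leaves). -/
structure Param (Var A : Type) where
  dvar : List Bool → Var
  bound : List Bool → ℤ
  act : List Bool → A

/-- The decision tree `𝒫(f)` instantiated from the skeleton by the
parameterization `f`. -/
def Skel.build : Skel → Param Var A → List Bool → DT Var A
  | .leaf, f, p => .leaf (f.act p)
  | .node l r, f, p =>
      .node (f.dvar p) (f.bound p) (l.build f (p ++ [true])) (r.build f (p ++ [false]))

/-- A rectangular set of parameterizations `F`. -/
structure FamSet (Var A : Type) where
  dvarS : List Bool → Set Var
  boundS : List Bool → Set ℤ
  actS : List Bool → Set A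

/-- `f ∈ F`: the parameterization `f` belongs to the rectangular set `F`. -/
def memF (sk : Skel) (F : FamSet Var A) (f : Param Var A) : Prop :=
  (∀ p, sk.IsInnerAt p → f.dvar p ∈ F.dvarS p ∧ f.bound p ∈ F.boundS p) ∧
  (∀ p, sk.IsLeafAt p → f.act p ∈ F.actS p)

variable {Var : Type}

/-- The policy induced by a decision tree in the MDP `M` whose states carry the
variable valuations `val`: play the action of the leaf the state is routed to if it
is available, and otherwise fall back to the random action `astar`. -/
def indPol (M : MDP S A) (val : S → Var → ℤ) (astar : A) (t : DT Var A) (s : S) : A :=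
  if (M.P s (t.eval (val s))).isSome then t.eval (val s) else astar

/-- The policy induced by the decision tree `𝒫(f)` instantiated from skeleton `sk`
by parameterization `f`. -/
def indOf (M : MDP S A) (val : S → Var → ℤ) (astar : A) (sk : Skel)
    (f : Param Var A) : S → A :=
  indPol M val astar (sk.build f [])

/-- Action `a` is enabled in state `s` in the family-MDP `M(F)` of the
parameterization subset `F`. -/
def famEnabled (M : MDP S A) (val : S → Var → ℤ) (astar : A) (sk : Skel)
    (F : Set (Param Var A)) (s : S) (a : A) : Prop :=
  M.Avail s a ∧ ∃ f ∈ F, indOf M val astar sk f s = a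

/-- `σ` is a policy of the family-MDP `M(F)`. -/
def IsFamPolicy (M : MDP S A) (val : S → Var → ℤ) (astar : A) (sk : Skel)
    (F : Set (Param Var A)) (σ : S → A) : Prop :=
  ∀ s, famEnabled M val astar sk F s (σ s)

/-- Membership in `F^𝒫`, the largest finite set of parameterizations of the template:
every bound is a value `val s v` of some variable in some state. -/
def memFP (val : S → Var → ℤ) (sk : Skel) (f : Param Var A) : Prop :=
  ∀ p, sk.IsInnerAt p → ∃ s v, f.bound p = val s v

/-- `f` is a parameterization of maximal value among all of `F^𝒫`. -/
noncomputable def IsMax (M : MDP S A) (val : S → Var → ℤ) (astar : A) (G : Finset S)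
    (sk : Skel) (f : Param Var A) : Prop :=
  memFP val sk f ∧ ∀ f' : Param Var A, memFP val sk f' →
    M.polValue G (indOf M val astar sk f') ≤ M.polValue G (indOf M val astar sk f)

/-- The value `V_best` of the running optimum (`⊥` = `-∞` when no optimum has been
recorded yet). -/
noncomputable def bestVal (M : MDP S A) (val : S → Var → ℤ) (astar : A) (G : Finset S)
    (sk : Skel) : Option (Param Var A) → WithBot ℝ≥0
  | none => ⊥
  | some f => (M.polValue G (indOf M val astar sk f) : WithBot ℝ≥0)

/-- One iteration of Algorithm 1 on states `(stack of parameterization subsets,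
running optimum f_best)`.  The popped subset `F` is analyzed via a policy `σ`
maximizing the value over all policies of the family-MDP `M(F)`; `F` is pruned if
`V(σ) ≤ V_best`; it is pruned with the optimum updated if `Φ(F, σ)` is satisfiable
(i.e. some `f ∈ F` induces `σ`); otherwise `F` is split into `F₁, F₂` with
`F₁ ∪ F₂ = F` (possibly also raising the running optimum to some concrete
parameterization of `F` with a better value). -/
inductive Step {S A Var : Type} [Fintype S] [DecidableEq S]
    (M : MDP S A) (val : S → Var → ℤ) (astar : A) (G : Finset S) (sk : Skel) :
    List (Set (Param Var A)) × Option (Param Var A) →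
    List (Set (Param Var A)) × Option (Param Var A) → Prop
  | prune (F : Set (Param Var A)) (rest : List (Set (Param Var A)))
      (b : Option (Param Var A)) (σ : S → A)
      (hpol : IsFamPolicy M val astar sk F σ)
      (hmax : ∀ σ' : S → A, IsFamPolicy M val astar sk F σ' →
        M.polValue G σ' ≤ M.polValue G σ)
      (hle : (M.polValue G σ : WithBot ℝ≥0) ≤ bestVal M val astar G sk b) :
      Step M val astar G sk (F :: rest, b) (rest, b)
  | accept (F : Set (Param Var A)) (rest : List (Set (Param Var A)))
      (b : Option (Param Var A)) (σ : S → A) (f : Param Var A)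
      (hpol : IsFamPolicy M val astar sk F σ)
      (hmax : ∀ σ' : S → A, IsFamPolicy M val astar sk F σ' →
        M.polValue G σ' ≤ M.polValue G σ)
      (hgt : bestVal M val astar G sk b < (M.polValue G σ : WithBot ℝ≥0))
      (hsat : f ∈ F ∧ ∀ s, indOf M val astar sk f s = σ s) :
      Step M val astar G sk (F :: rest, b) (rest, some f)
  | split (F F₁ F₂ : Set (Param Var A)) (rest : List (Set (Param Var A)))
      (b b' : Option (Param Var A)) (σ : S → A)
      (hpol : IsFamPolicy M val astar sk F σ)
      (hmax : ∀ σ' : S → A, IsFamPolicy M val astar sk F σ' →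
        M.polValue G σ' ≤ M.polValue G σ)
      (hgt : bestVal M val astar G sk b < (M.polValue G σ : WithBot ℝ≥0))
      (hunsat : ¬ ∃ f ∈ F, ∀ s, indOf M val astar sk f s = σ s)
      (hcover : F₁ ∪ F₂ = F)
      (hb : b' = b ∨ ∃ f' ∈ F,
        bestVal M val astar G sk b < (M.polValue G (indOf M val astar sk f') : WithBot ℝ≥0) ∧
        b' = some f') :
      Step M val astar G sk (F :: rest, b) (F₁ :: F₂ :: rest, b')
end Paper15

namespace Paper15

open scoped NNReal

section Invariant

variable {S A Var : Type} [Fintype S] [DecidableEq S]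
  (M : MDP S A) (val : S → Var → ℤ) (astar : A) (G : Finset S) (sk : Skel)

/-- `V(𝒫(f))`. -/
noncomputable abbrev paramValue (f : Param Var A) : ℝ≥0 :=
  M.polValue G (indOf M val astar sk f)

def WellFormed (st : List (Set (Param Var A)) × Option (Param Var A)) : Prop :=
  (∀ F ∈ st.1, F ⊆ {f | memFP val sk f}) ∧ ∀ fb, st.2 = some fb → memFP val sk fb

def MaxRetained (st : List (Set (Param Var A)) × Option (Param Var A)) : Prop :=
  (∃ fb, st.2 = some fb ∧ IsMax M val astar G sk fb) ∨
    ∃ F ∈ st.1, ∃ f ∈ F, IsMax M val astar G sk f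

variable {M val astar G sk}

omit [DecidableEq S] in
/-- The fallback action `astar` makes every induced policy a policy of `M`. -/
theorem isFamPolicy_indOf (hstar : ∀ s, M.Avail s astar) {F : Set (Param Var A)}
    {f : Param Var A} (hf : f ∈ F) : IsFamPolicy M val astar sk F (indOf M val astar sk f) := by
  intro s
  refine ⟨?_, f, hf, rfl⟩
  unfold MDP.Avail indOf indPol
  split_ifs with h
  · exact h
  · exact hstar s

theorem paramValue_le_of_isFamOptimal (hstar : ∀ s, M.Avail s astar)
    {F : Set (Param Var A)} {σ : S → A}
    (hmax : ∀ σ' : S → A, IsFamPolicy M val astar sk F σ' → M.polValue G σ' ≤ M.polValue G σ)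
    {f : Param Var A} (hf : f ∈ F) : paramValue M val astar G sk f ≤ M.polValue G σ :=
  hmax _ (isFamPolicy_indOf hstar hf)

theorem IsMax.of_le {f fb : Param Var A} (hf : IsMax M val astar G sk f)
    (hfb : memFP val sk fb) (hle : paramValue M val astar G sk f ≤ paramValue M val astar G sk fb) :
    IsMax M val astar G sk fb :=
  ⟨hfb, fun f' hf' => (hf.2 f' hf').trans hle⟩

theorem exists_of_coe_le_bestVal {x : ℝ≥0} {b : Option (Param Var A)}
    (h : (x : WithBot ℝ≥0) ≤ bestVal M val astar G sk b) :
    ∃ fb, b = some fb ∧ x ≤ paramValue M val astar G sk fb := by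
  cases b with
  | none => exact absurd h (WithBot.not_coe_le_bot x)
  | some fb => exact ⟨fb, rfl, WithBot.coe_le_coe.mp h⟩

/-- `F^𝒫` is nonempty, and its members induce only finitely many policies since `S` and `A`
are finite, so the maximum value is attained. -/
theorem exists_isMax [Fintype A] [Nonempty Var] : ∃ f, IsMax M val astar G sk f := by
  obtain ⟨v⟩ := ‹Nonempty Var›
  have hmem : memFP val sk (⟨fun _ => v, fun _ => val M.init v, fun _ => astar⟩ : Param Var A) :=
    fun _ _ => ⟨M.init, v, rfl⟩
  have hfin : (paramValue M val astar G sk '' {f | memFP val sk f}).Finite :=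
    (Set.finite_range (M.polValue G)).subset <| by
      rintro _ ⟨f, -, rfl⟩
      exact ⟨indOf M val astar sk f, rfl⟩
  obtain ⟨fmax, hfmax, hmaximal⟩ := hfin.exists_maximalFor' _ _ ⟨_, hmem⟩
  exact ⟨fmax, hfmax, fun f' hf' => (le_total _ _).elim id (hmaximal hf')⟩

theorem Step.wellFormed {st st' : List (Set (Param Var A)) × Option (Param Var A)}
    (h : Step M val astar G sk st st') (hw : WellFormed val sk st) : WellFormed val sk st' := by
  obtain ⟨hsub, hrec⟩ := hw
  cases h with
  | prune => exact ⟨fun F' hF' => hsub F' (List.mem_cons_of_mem _ hF'), hrec⟩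
  | accept F rest b σ f _ _ _ hsat =>
    refine ⟨fun F' hF' => hsub F' (List.mem_cons_of_mem _ hF'), ?_⟩
    rintro _ ⟨⟩
    exact hsub F List.mem_cons_self hsat.1
  | split F F₁ F₂ rest b b' σ _ _ _ _ hcover hb =>
    have hF := hsub F List.mem_cons_self
    refine ⟨?_, ?_⟩
    · simp only [List.mem_cons]
      rintro F' (rfl | rfl | hF')
      · exact (hcover ▸ Set.subset_union_left).trans hF
      · exact (hcover ▸ Set.subset_union_right).trans hF
      · exact hsub F' (List.mem_cons_of_mem _ hF')
    · rcases hb with rfl | ⟨f', hf', -, rfl⟩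
      · exact hrec
      · rintro _ ⟨⟩
        exact hF hf'

theorem Step.maxRetained (hstar : ∀ s, M.Avail s astar)
    {st st' : List (Set (Param Var A)) × Option (Param Var A)}
    (h : Step M val astar G sk st st') (hw : WellFormed val sk st)
    (hm : MaxRetained M val astar G sk st) : MaxRetained M val astar G sk st' := by
  obtain ⟨hsub, hrec⟩ := hw
  cases h with
  | prune F rest b σ _ hmax hle =>
    rcases hm with hb | ⟨F', hF', f, hf, hfmax⟩
    · exact Or.inl hb
    rcases List.mem_cons.mp hF' with rfl | hF'
    · obtain ⟨fb, rfl, hσ⟩ := exists_of_coe_le_bestVal hle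
      exact Or.inl ⟨fb, rfl,
        hfmax.of_le (hrec fb rfl) ((paramValue_le_of_isFamOptimal hstar hmax hf).trans hσ)⟩
    · exact Or.inr ⟨F', hF', f, hf, hfmax⟩
  | accept F rest b σ f _ hmax hgt hsat =>
    have hfσ : paramValue M val astar G sk f = M.polValue G σ := by
      rw [paramValue, funext hsat.2]
    have hf := hsub F List.mem_cons_self hsat.1
    rcases hm with ⟨fb, rfl, hfbmax⟩ | ⟨F', hF', f', hf', hf'max⟩
    · exact Or.inl ⟨f, rfl, hfbmax.of_le hf (hfσ ▸ (WithBot.coe_lt_coe.mp hgt).le)⟩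
    rcases List.mem_cons.mp hF' with rfl | hF'
    · exact Or.inl ⟨f, rfl, hf'max.of_le hf (hfσ ▸ paramValue_le_of_isFamOptimal hstar hmax hf')⟩
    · exact Or.inr ⟨F', hF', f', hf', hf'max⟩
  | split F F₁ F₂ rest b b' σ _ _ _ _ hcover hb =>
    rcases hm with ⟨fb, rfl, hfbmax⟩ | ⟨F', hF', f, hf, hfmax⟩
    · rcases hb with rfl | ⟨f', hf', hlt, rfl⟩
      · exact Or.inl ⟨fb, rfl, hfbmax⟩
      · exact Or.inl ⟨f', rfl,
          hfbmax.of_le (hsub F List.mem_cons_self hf') (WithBot.coe_lt_coe.mp hlt).le⟩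
    rcases List.mem_cons.mp hF' with rfl | hF'
    · rcases (hcover ▸ hf : f ∈ F₁ ∪ F₂) with hf₁ | hf₂
      · exact Or.inr ⟨F₁, List.mem_cons_self, f, hf₁, hfmax⟩
      · exact Or.inr ⟨F₂, List.mem_cons_of_mem _ List.mem_cons_self, f, hf₂, hfmax⟩
    · exact Or.inr ⟨F', List.mem_cons_of_mem _ (List.mem_cons_of_mem _ hF'), f, hf, hfmax⟩

theorem invariant_init [Fintype A] [Nonempty Var] :
    WellFormed val sk (([{f | memFP val sk f}], none) :
      List (Set (Param Var A)) × Option (Param Var A)) ∧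
    MaxRetained M val astar G sk ([{f | memFP val sk f}], none) := by
  obtain ⟨fmax, hfmax⟩ : ∃ f, IsMax M val astar G sk f := exists_isMax
  refine ⟨⟨?_, nofun⟩, Or.inr ⟨_, List.mem_singleton_self _, fmax, hfmax.1, hfmax⟩⟩
  simp

theorem Step.reflTransGen_invariant (hstar : ∀ s, M.Avail s astar)
    {st st' : List (Set (Param Var A)) × Option (Param Var A)}
    (h : Relation.ReflTransGen (Step M val astar G sk) st st')
    (hst : WellFormed val sk st ∧ MaxRetained M val astar G sk st) :
    WellFormed val sk st' ∧ MaxRetained M val astar G sk st' := by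
  induction h with
  | refl => exact hst
  | tail _ hstep ih => exact ⟨hstep.wellFormed ih.1, hstep.maxRetained hstar ih.1 ih.2⟩

end Invariant

theorem algorithm_sound_complete_general {S A Var : Type}
    [Fintype S] [DecidableEq S] [Fintype A] [Nonempty Var]
    (M : MDP S A) (val : S → Var → ℤ) (astar : A) (hstar : ∀ s, M.Avail s astar)
    (G : Finset S) (sk : Skel) :
    (∀ b : Option (Param Var A),
      Relation.ReflTransGen (Step M val astar G sk)
        ([{f | memFP val sk f}], none) ([], b) →
      ∃ f, b = some f ∧ IsMax M val astar G sk f) ∧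
    (∀ st : List (Set (Param Var A)) × Option (Param Var A),
      Relation.ReflTransGen (Step M val astar G sk)
        ([{f | memFP val sk f}], none) st →
      (∃ fb, st.2 = some fb ∧ IsMax M val astar G sk fb) ∨
        ∃ F ∈ st.1, ∃ f ∈ F, IsMax M val astar G sk f) := by
  have hretained st (h : Relation.ReflTransGen (Step M val astar G sk) _ st) :
      MaxRetained M val astar G sk st :=
    (Step.reflTransGen_invariant hstar h invariant_init).2
  refine ⟨fun b h => ?_, hretained⟩
  rcases hretained _ h with hb | ⟨F, hF, -⟩
  · exact hb
  · exact absurd hF List.not_mem_nil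

/-- **Theorem 4.** Algorithm 1 is sound and complete: starting from the
stack `[F^𝒫]` with no recorded optimum, upon termination (empty stack) the recorded
optimum is a parameterization of maximal value among all of `F^𝒫`; moreover, in every
reachable configuration, either the recorded optimum is already of maximal value or
some subset on the stack still contains a parameterization of maximal value (i.e. no
maximal parameterization is ever discarded by the pruning steps unless a maximal one
has been recorded). -/
theorem algorithm_sound_complete {S A Var : Type}
    [Fintype S] [DecidableEq S] [Fintype A] [Fintype Var] [Nonempty Var]
    (M : MDP S A) (val : S → Var → ℤ) (astar : A) (hstar : ∀ s, M.Avail s astar)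
    (G : Finset S) (sk : Skel) :
    (∀ b : Option (Param Var A),
      Relation.ReflTransGen (Step M val astar G sk)
        ([{f | memFP val sk f}], none) ([], b) →
      ∃ f, b = some f ∧ IsMax M val astar G sk f) ∧
    (∀ st : List (Set (Param Var A)) × Option (Param Var A),
      Relation.ReflTransGen (Step M val astar G sk)
        ([{f | memFP val sk f}], none) st →
      (∃ fb, st.2 = some fb ∧ IsMax M val astar G sk fb) ∨
        ∃ F ∈ st.1, ∃ f ∈ F, IsMax M val astar G sk f) :=
  algorithm_sound_complete_general M val astar hstar G sk

end Paper15
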